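/- arXiv:2507.12736 — 3 statements merged into one kernel-verified Lean document; each statement's English description precedes it below -/
import Mathlib

section
/- Let Y and Ỹ be Polish spaces, g: Y → Y, g̃: Ỹ → Ỹ Borel measurable, Π: Ỹ → Y Borel measurable with g ∘ Π = Π ∘ g̃. Let μ̃ be an ergodic g̃-invariant Borel probability measure with μ = Π_*μ̃. Suppose the set of continuity points of Π has full μ̃-measure. Then Π maps the weak* basin B(μ̃) into the weak* basin B(μ); that is, if (1/n) Σ_{j<n} δ_{g̃ʲ(x)} converges to μ̃ in the weak* topology, then (1/n) Σ_{j<n} δ_{gʲ(Π(x))} converges to μ in the weak* topology. -/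
/-!
The empirical measures of `x` along `g̃` converge weakly to `μ̃`, and by the semiconjugacy their
pushforwards under `Π` are the empirical measures of `Π x` along `g`. Pushforward preserves weak
convergence as soon as `Π` is continuous `μ̃`-almost everywhere: for `G` open, `Π⁻¹ G` contains a
neighbourhood of each of its continuity points, so it differs from its interior by a `μ̃`-null set
and the Portmanteau lower bound on open sets passes through `Π`.
-/

open MeasureTheory Filter Topology

namespace MeasureTheory

section Empirical

variable {X : Type*} [MeasurableSpace X]

noncomputable def empiricalMeasure (T : X → X) (x : X) (n : ℕ) : Measure X :=
  (n : ENNReal)⁻¹ • ∑ j ∈ Finset.range n, Measure.dirac (T^[j] x)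

theorem isProbabilityMeasure_empiricalMeasure (T : X → X) (x : X) {n : ℕ} (hn : n ≠ 0) :
    IsProbabilityMeasure (empiricalMeasure T x n) := by
  constructor
  simp [empiricalMeasure, ENNReal.inv_mul_cancel (Nat.cast_ne_zero.2 hn)]

theorem integral_empiricalMeasure [MeasurableSingletonClass X] (T : X → X) (x : X) (n : ℕ)
    (f : X → ℝ) :
    ∫ y, f y ∂empiricalMeasure T x n = (1 / (n : ℝ)) * ∑ j ∈ Finset.range n, f (T^[j] x) := by
  rw [empiricalMeasure, integral_smul_measure,
    integral_finsetSum_measure fun j _ => integrable_dirac enorm_lt_top]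
  simp [integral_dirac]

theorem map_empiricalMeasure {Y : Type*} [MeasurableSpace Y] {T : X → X} {S : Y → Y} {π : X → Y}
    (hπ : Measurable π) (hsemi : Function.Semiconj π T S) (x : X) (n : ℕ) :
    (empiricalMeasure T x n).map π = empiricalMeasure S (π x) n := by
  simp only [empiricalMeasure, Measure.map_smul, Measure.map_finset_sum hπ.aemeasurable,
    Measure.map_dirac' hπ, (hsemi.iterate_right _).eq]

end Empirical

namespace ProbabilityMeasure

variable {X : Type*} [MeasurableSpace X]

/-- Indexed by `n` but averaging over the first `n + 1` points of the orbit, since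
`empiricalMeasure T x 0 = 0`. -/
noncomputable def empirical (T : X → X) (x : X) (n : ℕ) : ProbabilityMeasure X :=
  ⟨empiricalMeasure T x (n + 1), isProbabilityMeasure_empiricalMeasure T x n.succ_ne_zero⟩

theorem map_empirical {Y : Type*} [MeasurableSpace Y] {T : X → X} {S : Y → Y} {π : X → Y}
    (hπ : Measurable π) (hsemi : Function.Semiconj π T S) (x : X) (n : ℕ) :
    (empirical T x n).map hπ.aemeasurable = empirical S (π x) n :=
  Subtype.ext (map_empiricalMeasure hπ hsemi x (n + 1))

theorem tendsto_empirical_iff [TopologicalSpace X] [OpensMeasurableSpace X]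
    [MeasurableSingletonClass X] (T : X → X) (x : X) (μ : ProbabilityMeasure X) :
    Tendsto (empirical T x) atTop (𝓝 μ) ↔ ∀ ψ : BoundedContinuousFunction X ℝ,
      Tendsto (fun n : ℕ => (1 / (n : ℝ)) * ∑ j ∈ Finset.range n, ψ (T^[j] x))
        atTop (𝓝 (∫ y, ψ y ∂μ)) := by
  rw [tendsto_iff_forall_integral_tendsto]
  refine forall_congr' fun ψ => ?_
  rw [iff_comm, ← tendsto_add_atTop_iff_nat 1]
  exact tendsto_congr fun n => (integral_empiricalMeasure T x (n + 1) ψ).symm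

theorem tendsto_map_of_tendsto_of_ae_continuousAt [TopologicalSpace X] [OpensMeasurableSpace X]
    [HasOuterApproxClosed X] {Y : Type*} [MeasurableSpace Y] [TopologicalSpace Y]
    [OpensMeasurableSpace Y] {ι : Type*} {L : Filter ι} [L.IsCountablyGenerated]
    {μs : ι → ProbabilityMeasure X} {μ : ProbabilityMeasure X} (hμs : Tendsto μs L (𝓝 μ))
    {f : X → Y} (hf : Measurable f) (hcont : ∀ᵐ x ∂(μ : Measure X), ContinuousAt f x) :
    Tendsto (fun i => (μs i).map hf.aemeasurable) L (𝓝 (μ.map hf.aemeasurable)) := by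
  refine tendsto_of_forall_isOpen_le_liminf' fun G hG => ?_
  simp only [toMeasure_map, Measure.map_apply hf hG.measurableSet]
  have hint : f ⁻¹' G ≤ᵐ[(μ : Measure X)] interior (f ⁻¹' G) := by
    filter_upwards [hcont] with x hx hxG
    exact mem_interior_iff_mem_nhds.2 (hx (hG.mem_nhds hxG))
  calc (μ : Measure X) (f ⁻¹' G) ≤ (μ : Measure X) (interior (f ⁻¹' G)) := measure_mono_ae hint
    _ ≤ L.liminf fun i => (μs i : Measure X) (interior (f ⁻¹' G)) :=
      le_liminf_measure_open_of_tendsto hμs isOpen_interior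
    _ ≤ L.liminf fun i => (μs i : Measure X) (f ⁻¹' G) :=
      liminf_le_liminf (.of_forall fun i => measure_mono interior_subset)

end ProbabilityMeasure

end MeasureTheory

theorem stmt7_general {Y Z : Type*}
    [TopologicalSpace Y] [PolishSpace Y] [MeasurableSpace Y] [BorelSpace Y]
    [TopologicalSpace Z] [PolishSpace Z] [MeasurableSpace Z] [BorelSpace Z]
    (g : Y → Y) (gt : Z → Z) (pr : Z → Y)
    (hpr : Measurable pr)
    (hconj : g ∘ pr = pr ∘ gt)
    (μt : Measure Z) [IsProbabilityMeasure μt]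
    (hcont : μt {z | ContinuousAt pr z} = 1)
    (x : Z)
    (hx : ∀ ψ : BoundedContinuousFunction Z ℝ,
      Tendsto (fun n : ℕ => (1 / (n : ℝ)) * ∑ j ∈ Finset.range n, ψ (gt^[j] x))
        atTop (nhds (∫ z, ψ z ∂μt))) :
    ∀ φ : BoundedContinuousFunction Y ℝ,
      Tendsto (fun n : ℕ => (1 / (n : ℝ)) * ∑ j ∈ Finset.range n, φ (g^[j] (pr x)))
        atTop (nhds (∫ y, φ y ∂(Measure.map pr μt))) := by
  let μ : ProbabilityMeasure Z := ⟨μt, inferInstance⟩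
  have hae : ∀ᵐ z ∂μt, ContinuousAt pr z :=
    mem_ae_iff.2 ((prob_compl_eq_zero_iff (IsGδ.setOfPred_continuousAt pr).measurableSet).2 hcont)
  have hsemi : Function.Semiconj pr gt g := fun z => (congrFun hconj z).symm
  have hZ : Tendsto (ProbabilityMeasure.empirical gt x) atTop (𝓝 μ) :=
    (ProbabilityMeasure.tendsto_empirical_iff gt x μ).2 hx
  have hY := ProbabilityMeasure.tendsto_map_of_tendsto_of_ae_continuousAt hZ hpr hae
  simp only [ProbabilityMeasure.map_empirical hpr hsemi] at hY
  exact (ProbabilityMeasure.tendsto_empirical_iff g (pr x) _).1 hY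

/-- Polish-space semiconjugacy with μ̃-a.e. continuity points: the image under Π of the
weak* basin of μ̃ is contained in the weak* basin of μ = Π_*μ̃.  Weak* convergence of
the empirical measures is phrased via integration of bounded continuous functions. -/
theorem stmt7 {Y Z : Type*}
    [TopologicalSpace Y] [PolishSpace Y] [MeasurableSpace Y] [BorelSpace Y]
    [TopologicalSpace Z] [PolishSpace Z] [MeasurableSpace Z] [BorelSpace Z]
    (g : Y → Y) (gt : Z → Z) (pr : Z → Y)
    (hg : Measurable g) (hgt : Measurable gt) (hpr : Measurable pr)
    (hconj : g ∘ pr = pr ∘ gt)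
    (μt : Measure Z) [IsProbabilityMeasure μt] (herg : Ergodic gt μt)
    (hcont : μt {z | ContinuousAt pr z} = 1)
    (x : Z)
    (hx : ∀ ψ : BoundedContinuousFunction Z ℝ,
      Tendsto (fun n : ℕ => (1 / (n : ℝ)) * ∑ j ∈ Finset.range n, ψ (gt^[j] x))
        atTop (nhds (∫ z, ψ z ∂μt))) :
    ∀ φ : BoundedContinuousFunction Y ℝ,
      Tendsto (fun n : ℕ => (1 / (n : ℝ)) * ∑ j ∈ Finset.range n, φ (g^[j] (pr x)))
        atTop (nhds (∫ y, φ y ∂(Measure.map pr μt))) :=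
  stmt7_general g gt pr hpr hconj μt hcont x hx
end

section
/- Let S = [0,1] with Lebesgue measure, T a finite set with the discrete topology, and g: S × T → T a function such that for each t ∈ T the set D(t) of discontinuity points of s ↦ g_s(t) is Lebesgue-null. Fix t ∈ T and for n ≥ 1 define G_n: Sⁿ → T by G_n(s₀,…,s_{n-1}) = g_{s_{n-1}} ∘ ⋯ ∘ g_{s₀}(t). Then for every n ≥ 1, the set of discontinuity points of G_n has n-dimensional Lebesgue measure zero. -/
open MeasureTheory

private lemma cwa_discrete {X T : Type*} [TopologicalSpace X] [TopologicalSpace T]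
    [DiscreteTopology T] {f : X → T} {Q : Set X} {x : X} :
    ContinuousWithinAt f Q x ↔ ∀ᶠ y in nhdsWithin x Q, f y = f x := by
  rw [ContinuousWithinAt, nhds_discrete, Filter.tendsto_pure]

private lemma foldl_key {T : Type*} (g : ℝ → T → T) (t : T) {n : ℕ} (u : Fin (n+1) → ℝ) :
    (List.ofFn u).foldl (fun a c => g c a) t
      = g (u (Fin.last n)) ((List.ofFn (Fin.init u)).foldl (fun a c => g c a) t) := by
  rw [List.ofFn_succ', List.concat_eq_append, List.foldl_append]
  rfl

private lemma tendsto_init {n : ℕ} (s : Fin (n+1) → ℝ) :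
    Filter.Tendsto Fin.init
      (nhdsWithin s (Set.univ.pi fun _ : Fin (n+1) => Set.Icc (0:ℝ) 1))
      (nhdsWithin (Fin.init s) (Set.univ.pi fun _ : Fin n => Set.Icc (0:ℝ) 1)) := by
  apply ContinuousWithinAt.tendsto_nhdsWithin
  · exact (continuous_pi fun i => continuous_apply i.castSucc).continuousWithinAt
  · intro u hu i _
    exact hu i.castSucc (Set.mem_univ _)

private lemma tendsto_last {n : ℕ} (s : Fin (n+1) → ℝ) :
    Filter.Tendsto (fun u : Fin (n+1) → ℝ => u (Fin.last n))
      (nhdsWithin s (Set.univ.pi fun _ : Fin (n+1) => Set.Icc (0:ℝ) 1))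
      (nhdsWithin (s (Fin.last n)) (Set.Icc (0:ℝ) 1)) := by
  apply ContinuousWithinAt.tendsto_nhdsWithin
  · exact (continuous_apply (Fin.last n)).continuousWithinAt
  · intro u hu
    exact hu (Fin.last n) (Set.mem_univ _)

private lemma step_cont {T : Type*} [TopologicalSpace T] [DiscreteTopology T]
    (g : ℝ → T → T) (t : T) {n : ℕ} (s : Fin (n+1) → ℝ)
    (h1 : ContinuousWithinAt (fun u : Fin n → ℝ => (List.ofFn u).foldl (fun a c => g c a) t)
      (Set.univ.pi fun _ : Fin n => Set.Icc (0:ℝ) 1) (Fin.init s))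
    (h2 : ContinuousWithinAt
      (fun u => g u ((List.ofFn (Fin.init s)).foldl (fun a c => g c a) t))
      (Set.Icc (0:ℝ) 1) (s (Fin.last n))) :
    ContinuousWithinAt (fun u : Fin (n+1) → ℝ => (List.ofFn u).foldl (fun a c => g c a) t)
      (Set.univ.pi fun _ : Fin (n+1) => Set.Icc (0:ℝ) 1) s := by
  rw [cwa_discrete] at h1 h2 ⊢
  filter_upwards [(tendsto_init s).eventually h1, (tendsto_last s).eventually h2]
    with u hu1 hu2
  rw [foldl_key, foldl_key, hu1, hu2]

/-- If for each `t` the discontinuity set of `s ↦ g s t` on `[0,1]` is Lebesgue-null,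
then for every `n ≥ 1` the discontinuity set (within `[0,1]ⁿ`) of
`G_n(s₀,…,s_{n-1}) = g_{s_{n-1}} ∘ ⋯ ∘ g_{s₀}(t)` has n-dimensional Lebesgue measure
zero. -/
theorem stmt9 {T : Type*} [Fintype T] [TopologicalSpace T] [DiscreteTopology T]
    (g : ℝ → T → T)
    (hD : ∀ t : T, volume {s : ℝ | s ∈ Set.Icc (0 : ℝ) 1 ∧
      ¬ ContinuousWithinAt (fun u => g u t) (Set.Icc (0 : ℝ) 1) s} = 0)
    (t : T) (n : ℕ) (hn : 1 ≤ n) :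
    Measure.pi (fun _ : Fin n => (volume : Measure ℝ))
      {s : Fin n → ℝ | s ∈ Set.univ.pi (fun _ : Fin n => Set.Icc (0 : ℝ) 1) ∧
        ¬ ContinuousWithinAt
            (fun u : Fin n → ℝ => (List.ofFn u).foldl (fun a c => g c a) t)
            (Set.univ.pi fun _ : Fin n => Set.Icc (0 : ℝ) 1) s} = 0 := by
  classical
  induction n, hn using Nat.le_induction with
  | base =>
    -- n = 1
    have hfun : (fun u : Fin 1 → ℝ => (List.ofFn u).foldl (fun a c => g c a) t)
        = fun u => g (u 0) t := by
      funext u; simp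
    apply measure_mono_null (t := Set.univ.pi fun _ : Fin 1 =>
      {s : ℝ | s ∈ Set.Icc (0:ℝ) 1 ∧
        ¬ ContinuousWithinAt (fun u => g u t) (Set.Icc (0:ℝ) 1) s})
    · rintro s ⟨hsQ, hsc⟩ i _
      have hi : i = 0 := Subsingleton.elim _ _
      subst hi
      refine ⟨hsQ 0 (Set.mem_univ _), fun hc => hsc ?_⟩
      rw [hfun, cwa_discrete] at *
      have tend0 : Filter.Tendsto (fun u : Fin 1 → ℝ => u 0)
          (nhdsWithin s (Set.univ.pi fun _ : Fin 1 => Set.Icc (0:ℝ) 1))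
          (nhdsWithin (s 0) (Set.Icc (0:ℝ) 1)) := by
        apply ContinuousWithinAt.tendsto_nhdsWithin
        · exact (continuous_apply (0 : Fin 1)).continuousWithinAt
        · intro u hu; exact hu 0 (Set.mem_univ _)
      filter_upwards [tend0.eventually hc] with u hu using hu
    · rw [Measure.pi_pi]
      have h0 := hD t
      simp only [Set.mem_Icc] at h0
      simp [h0]
  | succ n hn ih =>
    set A := {s : Fin n → ℝ | s ∈ Set.univ.pi (fun _ : Fin n => Set.Icc (0 : ℝ) 1) ∧
        ¬ ContinuousWithinAt
            (fun u : Fin n → ℝ => (List.ofFn u).foldl (fun a c => g c a) t)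
            (Set.univ.pi fun _ : Fin n => Set.Icc (0 : ℝ) 1) s} with hA
    set e := MeasurableEquiv.piFinSuccAbove (fun _ : Fin (n+1) => ℝ) (Fin.last n) with he
    have hesnd : ∀ u : Fin (n+1) → ℝ, (e u).2 = Fin.init u := by
      intro u; funext j
      simp [he, MeasurableEquiv.piFinSuccAbove, Fin.insertNthEquiv, Fin.removeNth,
        Fin.succAbove_last, Fin.init]
    have hefst : ∀ u : Fin (n+1) → ℝ, (e u).1 = u (Fin.last n) := by
      intro u
      simp [he, MeasurableEquiv.piFinSuccAbove, Fin.insertNthEquiv]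
    apply measure_mono_null (t :=
      (e ⁻¹' (Set.Icc (0:ℝ) 1 ×ˢ A)) ∪
      ⋃ t' : T, Set.univ.pi (fun i : Fin (n+1) =>
        if i = Fin.last n then
          {s : ℝ | s ∈ Set.Icc (0:ℝ) 1 ∧
            ¬ ContinuousWithinAt (fun u => g u t') (Set.Icc (0:ℝ) 1) s}
        else Set.Icc (0:ℝ) 1))
    · rintro s ⟨hsQ, hsc⟩
      have hinitQ : Fin.init s ∈ Set.univ.pi fun _ : Fin n => Set.Icc (0:ℝ) 1 :=
        fun i _ => hsQ i.castSucc (Set.mem_univ _)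
      by_cases h1 : ContinuousWithinAt
          (fun u : Fin n → ℝ => (List.ofFn u).foldl (fun a c => g c a) t)
          (Set.univ.pi fun _ : Fin n => Set.Icc (0:ℝ) 1) (Fin.init s)
      · right
        refine Set.mem_iUnion.2 ⟨(List.ofFn (Fin.init s)).foldl (fun a c => g c a) t, ?_⟩
        intro i _
        by_cases hi : i = Fin.last n
        · subst hi
          simp only [if_pos rfl]
          refine ⟨hsQ (Fin.last n) (Set.mem_univ _), fun h2 => hsc ?_⟩
          exact step_cont g t s h1 h2
        · simp only [if_neg hi]
          exact hsQ i (Set.mem_univ _)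
      · left
        refine Set.mem_preimage.2 ?_
        rw [Set.mem_prod, hefst, hesnd]
        exact ⟨hsQ (Fin.last n) (Set.mem_univ _), hinitQ, h1⟩
    · apply measure_union_null
      · have hmp := measurePreserving_piFinSuccAbove
          (fun _ : Fin (n+1) => (volume : Measure ℝ)) (Fin.last n)
        rw [hmp.measure_preimage_equiv]
        rw [Measure.prod_prod, ih]
        simp
      · apply measure_iUnion_null
        intro t'
        rw [Measure.pi_pi]
        apply Finset.prod_eq_zero (Finset.mem_univ (Fin.last n))
        have h0 := hD t'
        simp only [Set.mem_Icc] at h0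
        simp [h0]
end

section
/- Let (T, 𝒜, p) and (X, ℬ, m) be probability spaces, S = [0,1] with Lebesgue measure ρ, g: S × T → T a measurable random map such that p is g-stationary in the sense that ∫ (g_s)_*p dρ(s) = p (equivalently p = ∫ Q(r, ·) dp(r) for Q(r, A) = ρ({s : g_s(r) ∈ A})), and f: T × X → X fibered (p,m)-nonsingular, i.e., (f_t)_*m ≪ m for p-a.e. t. Define h: S × (T × X) → T × X by h_s(t,x) = (g_s(t), f_{g_s(t)}(x)) and the skew-product H(ζ, (t,x)) = (σζ, h_{ζ₀}(t,x)) on Σ × (T × X) with Σ = S^ℕ, ν = ρ^ℕ. Then H is (ν × p × m)-nonsingular: if (ν × p × m)(A) = 0 then (H_*(ν × p × m))(A) = 0. -/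
open MeasureTheory ProbabilityTheory unitInterval

/-!
Under `ν = ρ^ℕ` the map `ξ ↦ (ξ₀, σξ)` carries `ν` to `ρ × ν` (the first coordinate is
independent of the tail), and stationarity says that `(s, t) ↦ g_s t` carries `ρ × p` to
`p`. Composing the two, the skew product `(ξ, (t, x)) ↦ (σξ, (g_{ξ₀} t, x))` preserves
`ν × p × m`. `H` is this map followed by `id × F` with `F (t, x) = (t, f_t x)`, and `F` is
`(p × m)`-nonsingular by Fubini, because almost every fibre map `f_t` is `m`-nonsingular.
-/

namespace MeasureTheory.Measure

variable {X : ℕ → Type*} [∀ n, MeasurableSpace (X n)]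

theorem ext_of_map_fin_restrict {μ₁ μ₂ : Measure (Π n, X n)} [IsFiniteMeasure μ₁]
    [IsFiniteMeasure μ₂]
    (h : ∀ n, μ₁.map (fun ξ (i : Fin n) => ξ i) = μ₂.map (fun ξ (i : Fin n) => ξ i)) :
    μ₁ = μ₂ := by
  refine IsProjectiveLimit.unique (P := fun (J : Finset ℕ) => μ₂.map J.restrict)
    (fun J => ?_) (fun _ => rfl)
  obtain ⟨n, hn⟩ : ∃ n, ∀ i ∈ J, i < n := ⟨J.sup id + 1, fun i hi =>
    Nat.lt_succ_of_le (Finset.le_sup (f := id) hi)⟩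
  let π : (Π i : Fin n, X i) → Π i : J, X i := fun y i => y ⟨i, hn i i.2⟩
  have hfac : (J.restrict : (Π n, X n) → _) = π ∘ fun ξ (i : Fin n) => ξ i := rfl
  have hπ : Measurable π := by fun_prop
  show μ₁.map J.restrict = μ₂.map J.restrict
  rw [hfac, ← map_map hπ (by fun_prop), ← map_map hπ (by fun_prop), h n]

variable (μ : (n : ℕ) → Measure (X n)) [∀ n, IsProbabilityMeasure (μ n)]

theorem eq_infinitePi_of_map_fin_restrict {ν : Measure (Π n, X n)} [IsFiniteMeasure ν]
    (h : ∀ n, ν.map (fun ξ (i : Fin n) => ξ i) = Measure.pi fun i : Fin n => μ i) :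
    ν = infinitePi μ :=
  ext_of_map_fin_restrict fun n => by
    rw [h n, map_infinitePi_infinitePi_of_inj Fin.val_injective, infinitePi_eq_pi]

theorem map_head_tail_infinitePi :
    (infinitePi μ).map (fun ξ => (ξ 0, fun n => ξ (n + 1))) =
      (μ 0).prod (infinitePi fun n => μ (n + 1)) := by
  let coord (n : ℕ) : MeasurableSpace (Π n, X n) := .comap (fun ξ => ξ n) inferInstance
  have hind : IndepFun (fun ξ : Π n, X n => ξ 0) (fun ξ n => ξ (n + 1)) (infinitePi μ) := by
    have hcoord : iIndep coord (infinitePi μ) := (iIndepFun_iff_iIndep _ _ _).1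
      (iIndepFun_infinitePi (P := μ) (X := fun _ => id) fun _ => measurable_id)
    have := indep_iSup_of_disjoint (fun n => (measurable_pi_apply n).comap_le) hcoord
      (S := {0}) (T := Set.range Nat.succ) (by simp [Set.disjoint_singleton_left])
    rw [IndepFun_iff_Indep]
    refine indep_of_indep_of_le_right (indep_of_indep_of_le_left this ?_) ?_
    · exact le_iSup₂ (f := fun n (_ : n ∈ ({0} : Set ℕ)) => coord n) 0 rfl
    · refine Measurable.comap_le
        (@measurable_pi_lambda _ _ _ (⨆ i ∈ Set.range Nat.succ, coord i) _ _ fun n => ?_)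
      exact Measurable.of_comap_le
        (le_iSup₂ (f := fun n (_ : n ∈ Set.range Nat.succ) => coord n) (n + 1) ⟨n, rfl⟩)
  rw [hind.map_prod_eq_prod_map_map (measurable_pi_apply 0).aemeasurable
    (measurable_pi_lambda _ fun n => measurable_pi_apply (n + 1)).aemeasurable,
    infinitePi_map_eval,
    map_infinitePi_infinitePi_of_inj (f := Nat.succ) Nat.succ_injective]

end MeasureTheory.Measure

namespace MeasureTheory

variable {S T X : Type*} [MeasurableSpace S] [MeasurableSpace T] [MeasurableSpace X]

theorem measurePreserving_uncurry_of_lintegral_map {ρ : Measure S} {p : Measure T} [SFinite p]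
    {g : S → T → T} (hg : Measurable (Function.uncurry g))
    (hstat : ∀ A, MeasurableSet A → ∫⁻ s, p.map (g s) A ∂ρ = p A) :
    MeasurePreserving (Function.uncurry g) (ρ.prod p) p := by
  refine ⟨hg, Measure.ext fun A hA => ?_⟩
  rw [Measure.map_apply hg hA, Measure.prod_apply (hg hA), ← hstat A hA]
  refine lintegral_congr fun s => ?_
  rw [Measure.map_apply hg.of_uncurry_left hA]
  rfl

theorem quasiMeasurePreserving_fiberwise {p : Measure T} {m m' : Measure X}
    [SFinite m] [SFinite m']
    {f : T → X → X} (hf : Measurable (Function.uncurry f))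
    (hfib : ∀ᵐ t ∂p, m.map (f t) ≪ m') :
    Measure.QuasiMeasurePreserving (fun q : T × X => (q.1, f q.1 q.2)) (p.prod m) (p.prod m') := by
  have hF : Measurable fun q : T × X => (q.1, f q.1 q.2) := measurable_fst.prodMk hf
  refine ⟨hF, Measure.AbsolutelyContinuous.mk fun B hB hB0 => ?_⟩
  rw [Measure.map_apply hF hB, Measure.prod_apply (hF hB),
    lintegral_eq_zero_iff (measurable_measure_prodMk_left (hF hB))]
  filter_upwards [Measure.measure_ae_null_of_prod_null hB0, hfib] with t ht hac
  have := hac ht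
  rwa [Measure.map_apply hf.of_uncurry_left (measurable_prodMk_left hB)] at this

theorem measurePreserving_skewProduct_of_split {Ω Z : Type*} [MeasurableSpace Ω]
    [MeasurableSpace Z] {ν : Measure Ω} {ρ : Measure S} {μ : Measure Z}
    [SFinite ν] [SFinite ρ] [SFinite μ] {e : Ω → S} {τ : Ω → Ω}
    (he : MeasurePreserving (fun ω => (e ω, τ ω)) ν (ρ.prod ν)) {g : S → Z → Z}
    (hg : MeasurePreserving (Function.uncurry g) (ρ.prod μ) μ) :
    MeasurePreserving (fun q : Ω × Z => (τ q.1, g (e q.1) q.2)) (ν.prod μ) (ν.prod μ) :=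
  ((MeasurePreserving.id ν).prod hg).comp <| (measurePreserving_prodAssoc ν ρ μ).comp <|
    (Measure.measurePreserving_swap.prod (MeasurePreserving.id μ)).comp <|
      he.prod (MeasurePreserving.id μ)

end MeasureTheory

/-- If `p` is stationary for the random map `g : I × T → T` and `f` is fibered
(p,m)-nonsingular, then the skew product `H(ζ,(t,x)) = (σζ, (g_{ζ₀} t, f_{g_{ζ₀} t} x))`
is `(ν × p × m)`-nonsingular, where `ν` is the product over ℕ of Lebesgue measure on
the unit interval `I = [0,1]` (characterized by its finite marginals). -/
theorem stmt14 {T X : Type*} [MeasurableSpace T] [MeasurableSpace X]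
    (p : Measure T) [IsProbabilityMeasure p] (m : Measure X) [IsProbabilityMeasure m]
    (g : I → T → T) (hg : Measurable (Function.uncurry g))
    (hstat : ∀ A : Set T, MeasurableSet A →
      ∫⁻ s : I, Measure.map (g s) p A = p A)
    (f : T → X → X) (hf : Measurable (Function.uncurry f))
    (hfib : ∀ᵐ t ∂p, Measure.map (f t) m ≪ m)
    (ν : Measure (ℕ → I)) [IsProbabilityMeasure ν]
    (hν : ∀ n : ℕ, Measure.map (fun ξ (i : Fin n) => ξ i) ν
      = Measure.pi (fun _ : Fin n => (volume : Measure I))) :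
    Measure.map
      (fun q : (ℕ → I) × (T × X) =>
        ((fun i => q.1 (i + 1)), (g (q.1 0) q.2.1, f (g (q.1 0) q.2.1) q.2.2)))
      (ν.prod (p.prod m)) ≪ ν.prod (p.prod m) := by
  obtain rfl := Measure.eq_infinitePi_of_map_fin_restrict (fun _ => volume) hν
  have hsplit : MeasurePreserving (fun ξ : ℕ → I => (ξ 0, fun n => ξ (n + 1)))
      (Measure.infinitePi fun _ => volume) (volume.prod (Measure.infinitePi fun _ => volume)) :=
    ⟨by fun_prop, Measure.map_head_tail_infinitePi _⟩
  have hstep : MeasurePreserving (fun q : I × T × X => (g q.1 q.2.1, q.2.2))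
      (volume.prod (p.prod m)) (p.prod m) :=
    ((measurePreserving_uncurry_of_lintegral_map hg hstat).prod (MeasurePreserving.id m)).comp
      (measurePreserving_prodAssoc volume p m).symm
  have hskew := measurePreserving_skewProduct_of_split hsplit
    (g := fun s (q : T × X) => (g s q.1, q.2)) hstep
  exact (QuasiMeasurePreserving.prodMap (.id _) (quasiMeasurePreserving_fiberwise hf hfib)).comp
    hskew.quasiMeasurePreserving |>.absolutelyContinuous
end
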